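/- arXiv:math/0602513 — 3 statements merged into one kernel-verified Lean document; each statement's English description precedes it below -/
import Mathlib

section
/- Let A be a unital C*-algebra, let k > 1 be an integer, let e₁, …, e_k be mutually orthogonal projections in A, and let u be a unitary in A such that u* e_i u = e_{i+1} for i = 1, …, k, where e_{k+1} = e₁. Let B be a finite-dimensional closed star-subalgebra of A contained in the corner e₁Ae₁ (i.e., b = e₁ b e₁ for all b ∈ B), and let z be a unitary of the corner e₁Ae₁ such that z* (u^k)* b u^k z = b for all b ∈ B. Suppose z = z₁ z₂ ⋯ z_{k−1}, where each z_i is a unitary of the corner e₁Ae₁, and set z_k = e₁. Define w = Σ_{i=1}^{k} e_i u^{k+1−i} z_i (u*)^{k−i} + (1 − Σ_{i=1}^{k} e_i) u. Then w is a unitary in A, ‖w − u‖ ≤ max{‖z_i − e₁‖ : 1 ≤ i ≤ k−1}, (w^i)* e₁ (w^i) = e_{i+1} for i = 1, …, k−1, and (w^k)* b w^k = b for all b ∈ B. -/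
set_option maxHeartbeats 4000000 in
/-- (Lemma on modifying a unitary implementing a cyclic shift of
projections so that its `k`-th power fixes a finite-dimensional subalgebra of the
corner `e 1 A e 1`.) -/
theorem stmt_0 {A : Type*} [NormedRing A] [StarRing A] [CStarRing A]
    [NormedAlgebra ℂ A] [StarModule ℂ A] [CompleteSpace A]
    (k : ℕ) (hk : 1 < k) (e : ℕ → A)
    (heproj : ∀ i, 1 ≤ i → i ≤ k → IsSelfAdjoint (e i) ∧ e i * e i = e i)
    (horth : ∀ i j, 1 ≤ i → i ≤ k → 1 ≤ j → j ≤ k → i ≠ j → e i * e j = 0)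
    (u : A) (hu : u ∈ unitary A)
    (hcyc : e (k + 1) = e 1)
    (hueu : ∀ i, 1 ≤ i → i ≤ k → star u * e i * u = e (i + 1))
    (B : NonUnitalStarSubalgebra ℂ A) (hBfd : FiniteDimensional ℂ B)
    (hBclosed : IsClosed (B : Set A))
    (hBcorner : ∀ b ∈ B, b = e 1 * b * e 1)
    (z : ℕ → A)
    (hzi : ∀ i, 1 ≤ i → i ≤ k - 1 →
      z i = e 1 * z i * e 1 ∧ star (z i) * z i = e 1 ∧ z i * star (z i) = e 1)
    (hzk : z k = e 1)
    (zz : A)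
    (hzzcorner : zz = e 1 * zz * e 1 ∧ star zz * zz = e 1 ∧ zz * star zz = e 1)
    (hzzB : ∀ b ∈ B, star zz * star (u ^ k) * b * (u ^ k) * zz = b)
    (hzzprod : zz = ((List.range (k - 1)).map (fun i => z (i + 1))).prod)
    (w : A)
    (hw : w = (∑ i ∈ Finset.Icc 1 k, e i * u ^ (k + 1 - i) * z i * (star u) ^ (k - i))
        + (1 - ∑ i ∈ Finset.Icc 1 k, e i) * u) :
    w ∈ unitary A ∧
      ‖w - u‖ ≤ (Finset.Icc 1 (k - 1)).sup'
        (Finset.nonempty_Icc.mpr (by omega)) (fun i => ‖z i - e 1‖) ∧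
      (∀ i, 1 ≤ i → i ≤ k - 1 → star (w ^ i) * e 1 * w ^ i = e (i + 1)) ∧
      (∀ b ∈ B, star (w ^ k) * b * w ^ k = b) := by
  classical
  letI : CStarAlgebra A := {}
  letI := CStarAlgebra.spectralOrder A
  haveI := CStarAlgebra.spectralOrderedRing A
  obtain ⟨hu1, hu2⟩ := Unitary.mem_iff.mp hu
  have hum : ∀ m : ℕ, star (u ^ m) * u ^ m = 1 ∧ u ^ m * star (u ^ m) = 1 :=
    fun m => Unitary.mem_iff.mp (pow_mem hu m)
  have can1 : ∀ (m : ℕ), (star u) ^ m * u ^ m = 1 := fun m => by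
    rw [← star_pow]; exact (hum m).1
  have can2 : ∀ (m : ℕ), u ^ m * (star u) ^ m = 1 := fun m => by
    rw [← star_pow]; exact (hum m).2
  have can1' : ∀ (m : ℕ) (x : A), (star u) ^ m * (u ^ m * x) = x := fun m x => by
    rw [← mul_assoc, can1, one_mul]
  have can2' : ∀ (m : ℕ) (x : A), u ^ m * ((star u) ^ m * x) = x := fun m x => by
    rw [← mul_assoc, can2, one_mul]
  -- projections, incl. index k+1
  have hsa : ∀ i, 1 ≤ i → i ≤ k + 1 → star (e i) = e i := by
    intro i h1 h2
    rcases Nat.lt_or_ge i (k + 1) with h | h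
    · exact (heproj i h1 (by omega)).1.star_eq
    · have hik : i = k + 1 := by omega
      subst hik; rw [hcyc]; exact (heproj 1 le_rfl (by omega)).1.star_eq
  have hee : ∀ i, 1 ≤ i → i ≤ k + 1 → e i * e i = e i := by
    intro i h1 h2
    rcases Nat.lt_or_ge i (k + 1) with h | h
    · exact (heproj i h1 (by omega)).2
    · have hik : i = k + 1 := by omega
      subst hik; rw [hcyc]; exact (heproj 1 le_rfl (by omega)).2
  have he11 : e 1 * e 1 = e 1 := hee 1 le_rfl (by omega)
  have hsa1 : star (e 1) = e 1 := hsa 1 le_rfl (by omega)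
  -- commutation: e i * u^m = u^m * e (i+m)
  have heum : ∀ m i, 1 ≤ i → i + m ≤ k + 1 → e i * u ^ m = u ^ m * e (i + m) := by
    intro m
    induction m with
    | zero => intro i _ _; simp
    | succ n ih =>
      intro i h1 h2
      have hn := ih i h1 (by omega)
      have heu : e (i + n) * u = u * e (i + n + 1) := by
        have h := hueu (i + n) (by omega) (by omega)
        calc e (i + n) * u = (u * star u) * e (i + n) * u := by rw [hu2, one_mul]
          _ = u * (star u * e (i + n) * u) := by simp only [mul_assoc]
          _ = u * e (i + n + 1) := by rw [h]
      calc e i * u ^ (n + 1) = e i * u ^ n * u := by rw [pow_succ, mul_assoc]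
        _ = u ^ n * e (i + n) * u := by rw [hn]
        _ = u ^ n * (e (i + n) * u) := by rw [mul_assoc]
        _ = u ^ n * (u * e (i + n + 1)) := by rw [heu]
        _ = u ^ (n + 1) * e (i + (n + 1)) := by
            rw [← mul_assoc, ← pow_succ]; ring_nf
  have heu1 : ∀ i, 1 ≤ i → i ≤ k → e i * u = u * e (i + 1) := by
    intro i h1 h2
    have := heum 1 i h1 (by omega)
    simpa using this
  have heu1s : ∀ i, 1 ≤ i → i ≤ k → e (i + 1) * star u = star u * e i := by
    intro i h1 h2
    have h := congrArg star (heu1 i h1 h2)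
    rw [star_mul, star_mul, hsa i h1 (by omega), hsa (i + 1) (by omega) (by omega)] at h
    exact h.symm
  -- e i * u^(k+1-i) = u^(k+1-i) * e 1, for 1 ≤ i ≤ k
  have he1X : ∀ i, 1 ≤ i → i ≤ k → e i * u ^ (k + 1 - i) = u ^ (k + 1 - i) * e 1 := by
    intro i h1 h2
    have := heum (k + 1 - i) i h1 (by omega)
    rwa [show i + (k + 1 - i) = k + 1 by omega, hcyc] at this
  -- e (i+1) * u^(k-i) = u^(k-i) * e 1, for 0 ≤ i ≤ k
  have he2X : ∀ i, i ≤ k → e (i + 1) * u ^ (k - i) = u ^ (k - i) * e 1 := by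
    intro i h2
    have := heum (k - i) (i + 1) (by omega) (by omega)
    rwa [show i + 1 + (k - i) = k + 1 by omega, hcyc] at this
  have he2Xs : ∀ i, i ≤ k → (star u) ^ (k - i) * e (i + 1) = e 1 * (star u) ^ (k - i) := by
    intro i h2
    have h := congrArg star (he2X i h2)
    rw [star_mul, star_mul, star_pow, hsa (i + 1) (by omega) (by omega), hsa1] at h
    exact h
  -- uniform properties of z i for 1 ≤ i ≤ k
  have hzall : ∀ i, 1 ≤ i → i ≤ k →
      e 1 * z i = z i ∧ z i * e 1 = z i ∧ star (z i) * z i = e 1 ∧ z i * star (z i) = e 1 := by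
    intro i h1 h2
    rcases Nat.lt_or_ge i k with h | h
    · obtain ⟨hc, hs1, hs2⟩ := hzi i h1 (by omega)
      have hl : e 1 * z i = z i := by
        conv_lhs => rw [hc]
        calc e 1 * (e 1 * z i * e 1) = e 1 * e 1 * z i * e 1 := by simp only [mul_assoc]
          _ = e 1 * z i * e 1 := by rw [he11]
          _ = z i := hc.symm
      have hr : z i * e 1 = z i := by
        conv_lhs => rw [hc]
        calc e 1 * z i * e 1 * e 1 = e 1 * z i * (e 1 * e 1) := by simp only [mul_assoc]
          _ = e 1 * z i * e 1 := by rw [he11]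
          _ = z i := hc.symm
      exact ⟨hl, hr, hs1, hs2⟩
    · have hik : i = k := by omega
      subst hik
      rw [hzk]
      exact ⟨he11, he11, by rw [hsa1, he11], by rw [hsa1, he11]⟩
  -- the projection p and its properties
  set p : A := ∑ i ∈ Finset.Icc 1 k, e i with hp
  have hep : ∀ j, 1 ≤ j → j ≤ k → e j * p = e j := by
    intro j h1 h2
    rw [hp, Finset.mul_sum]
    rw [Finset.sum_eq_single j (fun i hi hne => by
        obtain ⟨hi1, hi2⟩ := Finset.mem_Icc.mp hi
        exact horth j i h1 h2 hi1 hi2 (Ne.symm hne))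
      (fun hj => absurd (Finset.mem_Icc.mpr ⟨h1, h2⟩) hj)]
    exact hee j h1 (by omega)
  have hpe : ∀ j, 1 ≤ j → j ≤ k → p * e j = e j := by
    intro j h1 h2
    rw [hp, Finset.sum_mul]
    rw [Finset.sum_eq_single j (fun i hi hne => by
        obtain ⟨hi1, hi2⟩ := Finset.mem_Icc.mp hi
        exact horth i j hi1 hi2 h1 h2 hne)
      (fun hj => absurd (Finset.mem_Icc.mpr ⟨h1, h2⟩) hj)]
    exact hee j h1 (by omega)
  have hpp : p * p = p := by
    conv_lhs => rw [hp]
    rw [Finset.sum_mul]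
    exact Finset.sum_congr rfl (fun i hi => by
      obtain ⟨hi1, hi2⟩ := Finset.mem_Icc.mp hi
      exact hep i hi1 hi2)
  have hpsa : star p = p := by
    rw [hp, star_sum]
    exact Finset.sum_congr rfl fun i hi => by
      obtain ⟨hi1, hi2⟩ := Finset.mem_Icc.mp hi
      exact hsa i hi1 (by omega)
  have hIccR : ∀ f : ℕ → A, ∑ i ∈ Finset.Icc 1 k, f i = ∑ i ∈ Finset.range k, f (1 + i) := by
    intro f
    rw [← Finset.Ico_add_one_right_eq_Icc, Finset.sum_Ico_eq_sum_range]
    simp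
  have hshift : ∑ i ∈ Finset.Icc 1 k, e (i + 1) = p := by
    rw [hp, hIccR (fun i => e (i + 1)), hIccR e]
    have h1 := Finset.sum_range_succ' (fun i => e (1 + i)) k
    have h2 := Finset.sum_range_succ (fun i => e (1 + i)) k
    have h3 : e (1 + k) = e (1 + 0) := by
      rw [show 1 + k = k + 1 by omega, hcyc]
    rw [h3] at h2
    have h4 := h1.symm.trans h2
    have h5 := add_right_cancel h4
    calc ∑ i ∈ Finset.range k, e (1 + i + 1)
        = ∑ i ∈ Finset.range k, e (1 + (i + 1)) :=
          Finset.sum_congr rfl fun i _ => by rw [Nat.add_assoc]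
      _ = ∑ i ∈ Finset.range k, e (1 + i) := h5
  have hpu : p * u = u * p := by
    conv_lhs => rw [hp]
    rw [Finset.sum_mul]
    rw [Finset.sum_congr rfl (fun i hi => by
      obtain ⟨hi1, hi2⟩ := Finset.mem_Icc.mp hi
      exact heu1 i hi1 hi2)]
    rw [← Finset.mul_sum, hshift]
  have he1p : ∀ j, 1 ≤ j → j ≤ k → e j * (1 - p) = 0 := by
    intro j h1 h2
    rw [mul_sub, mul_one, hep j h1 h2, sub_self]
  have h1pe : ∀ j, 1 ≤ j → j ≤ k → (1 - p) * e j = 0 := by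
    intro j h1 h2
    rw [sub_mul, one_mul, hpe j h1 h2, sub_self]
  have h1p1p : (1 - p) * (1 - p) = 1 - p := by
    rw [mul_sub, mul_one, sub_mul, one_mul, hpp]
    abel
  -- the family t
  set t : ℕ → A := fun i => e i * u ^ (k + 1 - i) * z i * (star u) ^ (k - i) with ht
  have hw2 : w = (∑ i ∈ Finset.Icc 1 k, t i) + (1 - p) * u := hw
  have ht_eq : ∀ i, 1 ≤ i → i ≤ k →
      t i = u ^ (k + 1 - i) * (z i * (star u) ^ (k - i)) := by
    intro i h1 h2
    show e i * u ^ (k + 1 - i) * z i * (star u) ^ (k - i) = _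
    rw [he1X i h1 h2, mul_assoc (u ^ (k + 1 - i)) (e 1) (z i), (hzall i h1 h2).1, mul_assoc]
  have htl : ∀ i, 1 ≤ i → i ≤ k → e i * t i = t i := by
    intro i h1 h2
    show e i * (e i * u ^ (k + 1 - i) * z i * (star u) ^ (k - i)) = _
    simp only [← mul_assoc]
    rw [hee i h1 (by omega)]
  have htl0 : ∀ i j, 1 ≤ i → i ≤ k → 1 ≤ j → j ≤ k → j ≠ i → e j * t i = 0 := by
    intro i j h1 h2 h3 h4 hne
    show e j * (e i * u ^ (k + 1 - i) * z i * (star u) ^ (k - i)) = 0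
    simp only [← mul_assoc]
    rw [horth j i h3 h4 h1 h2 hne, zero_mul, zero_mul, zero_mul]
  have htr : ∀ i, 1 ≤ i → i ≤ k → t i * e (i + 1) = t i := by
    intro i h1 h2
    rw [ht_eq i h1 h2]
    calc u ^ (k + 1 - i) * (z i * (star u) ^ (k - i)) * e (i + 1)
        = u ^ (k + 1 - i) * (z i * ((star u) ^ (k - i) * e (i + 1))) := by
          simp only [mul_assoc]
      _ = u ^ (k + 1 - i) * (z i * (e 1 * (star u) ^ (k - i))) := by rw [he2Xs i h2]
      _ = u ^ (k + 1 - i) * (z i * e 1 * (star u) ^ (k - i)) := by simp only [mul_assoc]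
      _ = u ^ (k + 1 - i) * (z i * (star u) ^ (k - i)) := by rw [(hzall i h1 h2).2.1]
  have hstar_t : ∀ i, 1 ≤ i → i ≤ k →
      star (t i) = u ^ (k - i) * (star (z i) * (star u) ^ (k + 1 - i)) := by
    intro i h1 h2
    rw [ht_eq i h1 h2]
    simp only [star_mul, star_pow, star_star, mul_assoc]
  have htt : ∀ i, 1 ≤ i → i ≤ k → star (t i) * t i = e (i + 1) := by
    intro i h1 h2
    rw [hstar_t i h1 h2, ht_eq i h1 h2]
    calc u ^ (k - i) * (star (z i) * (star u) ^ (k + 1 - i)) *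
          (u ^ (k + 1 - i) * (z i * (star u) ^ (k - i)))
        = u ^ (k - i) * (star (z i) *
            ((star u) ^ (k + 1 - i) * (u ^ (k + 1 - i) * (z i * (star u) ^ (k - i))))) := by
          simp only [mul_assoc]
      _ = u ^ (k - i) * (star (z i) * (z i * (star u) ^ (k - i))) := by rw [can1']
      _ = u ^ (k - i) * (star (z i) * z i * (star u) ^ (k - i)) := by simp only [mul_assoc]
      _ = u ^ (k - i) * (e 1 * (star u) ^ (k - i)) := by rw [(hzall i h1 h2).2.2.1]
      _ = u ^ (k - i) * e 1 * (star u) ^ (k - i) := by rw [mul_assoc]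
      _ = e (i + 1) * u ^ (k - i) * (star u) ^ (k - i) := by rw [← he2X i h2]
      _ = e (i + 1) * (u ^ (k - i) * (star u) ^ (k - i)) := by rw [mul_assoc]
      _ = e (i + 1) := by rw [can2, mul_one]
  have hts : ∀ i, 1 ≤ i → i ≤ k → t i * star (t i) = e i := by
    intro i h1 h2
    rw [hstar_t i h1 h2, ht_eq i h1 h2]
    calc u ^ (k + 1 - i) * (z i * (star u) ^ (k - i)) *
          (u ^ (k - i) * (star (z i) * (star u) ^ (k + 1 - i)))
        = u ^ (k + 1 - i) * (z i *
            ((star u) ^ (k - i) * (u ^ (k - i) * (star (z i) * (star u) ^ (k + 1 - i))))) := by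
          simp only [mul_assoc]
      _ = u ^ (k + 1 - i) * (z i * (star (z i) * (star u) ^ (k + 1 - i))) := by rw [can1']
      _ = u ^ (k + 1 - i) * (z i * star (z i) * (star u) ^ (k + 1 - i)) := by
          simp only [mul_assoc]
      _ = u ^ (k + 1 - i) * (e 1 * (star u) ^ (k + 1 - i)) := by rw [(hzall i h1 h2).2.2.2]
      _ = u ^ (k + 1 - i) * e 1 * (star u) ^ (k + 1 - i) := by rw [mul_assoc]
      _ = e i * u ^ (k + 1 - i) * (star u) ^ (k + 1 - i) := by rw [← he1X i h1 h2]
      _ = e i * (u ^ (k + 1 - i) * (star u) ^ (k + 1 - i)) := by rw [mul_assoc]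
      _ = e i := by rw [can2, mul_one]
  have hstl : ∀ i, 1 ≤ i → i ≤ k → star (t i) * e i = star (t i) := by
    intro i h1 h2
    have h := congrArg star (htl i h1 h2)
    rw [star_mul, hsa i h1 (by omega)] at h
    exact h
  have hstr : ∀ i, 1 ≤ i → i ≤ k → e (i + 1) * star (t i) = star (t i) := by
    intro i h1 h2
    have h := congrArg star (htr i h1 h2)
    rw [star_mul, hsa (i + 1) (by omega) (by omega)] at h
    exact h
  have htot : ∀ i j, 1 ≤ i → i ≤ k → 1 ≤ j → j ≤ k → i ≠ j → star (t i) * t j = 0 := by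
    intro i j h1 h2 h3 h4 hne
    calc star (t i) * t j = star (t i) * e i * (e j * t j) := by
          rw [hstl i h1 h2, htl j h3 h4]
      _ = star (t i) * (e i * e j) * t j := by simp only [mul_assoc]
      _ = 0 := by rw [horth i j h1 h2 h3 h4 hne, mul_zero, zero_mul]
  have horth' : ∀ i j, 1 ≤ i → i ≤ k → 1 ≤ j → j ≤ k → i ≠ j →
      e (i + 1) * e (j + 1) = 0 := by
    intro i j h1 h2 h3 h4 hne
    rcases Nat.lt_or_ge i k with hi | hi
    · rcases Nat.lt_or_ge j k with hj | hj
      · exact horth (i + 1) (j + 1) (by omega) (by omega) (by omega) (by omega) (by omega)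
      · have hjk : j = k := by omega
        subst hjk
        rw [hcyc]
        exact horth (i + 1) 1 (by omega) (by omega) le_rfl (by omega) (by omega)
    · have hik : i = k := by omega
      subst hik
      rw [hcyc]
      exact horth 1 (j + 1) le_rfl (by omega) (by omega) (by omega) (by omega)
  have htos : ∀ i j, 1 ≤ i → i ≤ k → 1 ≤ j → j ≤ k → i ≠ j → t i * star (t j) = 0 := by
    intro i j h1 h2 h3 h4 hne
    calc t i * star (t j) = t i * e (i + 1) * (e (j + 1) * star (t j)) := by
          rw [htr i h1 h2, hstr j h3 h4]
      _ = t i * (e (i + 1) * e (j + 1)) * star (t j) := by simp only [mul_assoc]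
      _ = 0 := by rw [horth' i j h1 h2 h3 h4 hne, mul_zero, zero_mul]
  -- unitarity of w
  have hTsTin : ∀ i ∈ Finset.Icc 1 k,
      star (t i) * (∑ j ∈ Finset.Icc 1 k, t j) = e (i + 1) := by
    intro i hi
    obtain ⟨hi1, hi2⟩ := Finset.mem_Icc.mp hi
    rw [Finset.mul_sum]
    rw [Finset.sum_eq_single i (fun j hj hne => by
        obtain ⟨hj1, hj2⟩ := Finset.mem_Icc.mp hj
        exact htot i j hi1 hi2 hj1 hj2 (Ne.symm hne))
      (fun hx => absurd hi hx)]
    exact htt i hi1 hi2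
  have hTsT : star (∑ i ∈ Finset.Icc 1 k, t i) * (∑ i ∈ Finset.Icc 1 k, t i) = p := by
    rw [star_sum, Finset.sum_mul, Finset.sum_congr rfl hTsTin]
    exact hshift
  have hTTsin : ∀ i ∈ Finset.Icc 1 k,
      t i * (∑ j ∈ Finset.Icc 1 k, star (t j)) = e i := by
    intro i hi
    obtain ⟨hi1, hi2⟩ := Finset.mem_Icc.mp hi
    rw [Finset.mul_sum]
    rw [Finset.sum_eq_single i (fun j hj hne => by
        obtain ⟨hj1, hj2⟩ := Finset.mem_Icc.mp hj
        exact htos i j hi1 hi2 hj1 hj2 (Ne.symm hne))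
      (fun hx => absurd hi hx)]
    exact hts i hi1 hi2
  have hTTs : (∑ i ∈ Finset.Icc 1 k, t i) * star (∑ i ∈ Finset.Icc 1 k, t i) = p := by
    rw [star_sum, Finset.sum_mul, Finset.sum_congr rfl hTTsin]
  have hsr : star ((1 - p) * u) = star u * (1 - p) := by
    rw [star_mul, star_sub, star_one, hpsa]
  have hTr : star (∑ i ∈ Finset.Icc 1 k, t i) * ((1 - p) * u) = 0 := by
    rw [star_sum, Finset.sum_mul]
    apply Finset.sum_eq_zero
    intro i hi
    obtain ⟨hi1, hi2⟩ := Finset.mem_Icc.mp hi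
    calc star (t i) * ((1 - p) * u) = star (t i) * e i * ((1 - p) * u) := by
          rw [hstl i hi1 hi2]
      _ = star (t i) * (e i * (1 - p)) * u := by simp only [mul_assoc]
      _ = 0 := by rw [he1p i hi1 hi2, mul_zero, zero_mul]
  have hrT : star ((1 - p) * u) * (∑ i ∈ Finset.Icc 1 k, t i) = 0 := by
    rw [hsr, Finset.mul_sum]
    apply Finset.sum_eq_zero
    intro i hi
    obtain ⟨hi1, hi2⟩ := Finset.mem_Icc.mp hi
    calc star u * (1 - p) * t i = star u * (1 - p) * (e i * t i) := by rw [htl i hi1 hi2]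
      _ = star u * ((1 - p) * e i) * t i := by simp only [mul_assoc]
      _ = 0 := by rw [h1pe i hi1 hi2, mul_zero, zero_mul]
  have hrr : star ((1 - p) * u) * ((1 - p) * u) = 1 - p := by
    rw [hsr]
    calc star u * (1 - p) * ((1 - p) * u) = star u * ((1 - p) * (1 - p)) * u := by
          simp only [mul_assoc]
      _ = star u * (1 - p) * u := by rw [h1p1p]
      _ = star u * u - star u * (p * u) := by rw [mul_sub, sub_mul, mul_one]; simp [mul_assoc]
      _ = 1 - star u * (u * p) := by rw [hu1, hpu]
      _ = 1 - p := by rw [← mul_assoc, hu1, one_mul]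
  have hTrs : (∑ i ∈ Finset.Icc 1 k, t i) * star ((1 - p) * u) = 0 := by
    rw [hsr, Finset.sum_mul]
    apply Finset.sum_eq_zero
    intro i hi
    obtain ⟨hi1, hi2⟩ := Finset.mem_Icc.mp hi
    calc t i * (star u * (1 - p)) = t i * e (i + 1) * (star u * (1 - p)) := by
          rw [htr i hi1 hi2]
      _ = t i * (e (i + 1) * star u) * (1 - p) := by simp only [mul_assoc]
      _ = t i * (star u * e i) * (1 - p) := by rw [heu1s i hi1 hi2]
      _ = t i * star u * (e i * (1 - p)) := by simp only [mul_assoc]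
      _ = 0 := by rw [he1p i hi1 hi2, mul_zero]
  have hrTs : ((1 - p) * u) * star (∑ i ∈ Finset.Icc 1 k, t i) = 0 := by
    rw [star_sum, Finset.mul_sum]
    apply Finset.sum_eq_zero
    intro i hi
    obtain ⟨hi1, hi2⟩ := Finset.mem_Icc.mp hi
    calc (1 - p) * u * star (t i) = (1 - p) * u * (e (i + 1) * star (t i)) := by
          rw [hstr i hi1 hi2]
      _ = (1 - p) * (u * e (i + 1)) * star (t i) := by simp only [mul_assoc]
      _ = (1 - p) * (e i * u) * star (t i) := by rw [← heu1 i hi1 hi2]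
      _ = (1 - p) * e i * (u * star (t i)) := by simp only [mul_assoc]
      _ = 0 := by rw [h1pe i hi1 hi2, zero_mul]
  have hrrs : ((1 - p) * u) * star ((1 - p) * u) = 1 - p := by
    rw [hsr]
    calc (1 - p) * u * (star u * (1 - p)) = (1 - p) * (u * star u) * (1 - p) := by
          simp only [mul_assoc]
      _ = (1 - p) * (1 - p) := by rw [hu2, mul_one]
      _ = 1 - p := h1p1p
  have hww1 : star w * w = 1 := by
    rw [hw2, star_add, add_mul, mul_add, mul_add, hTsT, hTr, hrT, hrr]
    abel
  have hww2 : w * star w = 1 := by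
    rw [hw2, star_add, add_mul, mul_add, mul_add, hTTs, hTrs, hrTs, hrrs]
    abel
  have hwu : w ∈ unitary A := Unitary.mem_iff.mpr ⟨hww1, hww2⟩
  -- the norm estimate
  set m : ℝ := (Finset.Icc 1 (k - 1)).sup'
    (Finset.nonempty_Icc.mpr (by omega)) (fun i => ‖z i - e 1‖) with hm
  have hm0 : 0 ≤ m := by
    have h1m : 1 ∈ Finset.Icc 1 (k - 1) := Finset.mem_Icc.mpr ⟨le_rfl, by omega⟩
    exact le_trans (norm_nonneg (z 1 - e 1))
      (Finset.le_sup' (fun i => ‖z i - e 1‖) h1m)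
  have hone : ‖(1 : A)‖ ≤ 1 := by
    have h := CStarRing.norm_star_mul_self (x := (1 : A))
    rw [star_one, one_mul] at h
    nlinarith [norm_nonneg (1 : A)]
  have hupow : ∀ n : ℕ, ‖u ^ n‖ ≤ 1 := by
    intro n
    have h := CStarRing.norm_star_mul_self (x := u ^ n)
    rw [(hum n).1] at h
    nlinarith [norm_nonneg (u ^ n)]
  have hvpow : ∀ n : ℕ, ‖(star u) ^ n‖ ≤ 1 := by
    intro n
    rw [← star_pow, norm_star]
    exact hupow n
  have hwmu : w - u = ∑ i ∈ Finset.Icc 1 k, (t i - e i * u) := by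
    rw [hw2, Finset.sum_sub_distrib, ← Finset.sum_mul, ← hp, sub_mul, one_mul]
    abel
  have hdl : ∀ i, 1 ≤ i → i ≤ k → e i * (t i - e i * u) = t i - e i * u := by
    intro i h1 h2
    rw [mul_sub, htl i h1 h2, ← mul_assoc, hee i h1 (by omega)]
  have hdl0 : ∀ i j, 1 ≤ i → i ≤ k → 1 ≤ j → j ≤ k → j ≠ i →
      e j * (t i - e i * u) = 0 := by
    intro i j h1 h2 h3 h4 hne
    rw [mul_sub, htl0 i j h1 h2 h3 h4 hne, ← mul_assoc, horth j i h3 h4 h1 h2 hne,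
      zero_mul, sub_zero]
  have hdr : ∀ i, 1 ≤ i → i ≤ k → (t i - e i * u) * e (i + 1) = t i - e i * u := by
    intro i h1 h2
    rw [sub_mul, htr i h1 h2, mul_assoc, ← heu1 i h1 h2, ← mul_assoc, hee i h1 (by omega)]
  have hdsl : ∀ i, 1 ≤ i → i ≤ k →
      star (t i - e i * u) * e i = star (t i - e i * u) := by
    intro i h1 h2
    have h := congrArg star (hdl i h1 h2)
    rw [star_mul, hsa i h1 (by omega)] at h
    exact h
  have hdsr : ∀ i, 1 ≤ i → i ≤ k →
      e (i + 1) * star (t i - e i * u) = star (t i - e i * u) := by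
    intro i h1 h2
    have h := congrArg star (hdr i h1 h2)
    rw [star_mul, hsa (i + 1) (by omega) (by omega)] at h
    exact h
  have heiu : ∀ i, 1 ≤ i → i ≤ k →
      e i * u = u ^ (k + 1 - i) * (e 1 * (star u) ^ (k - i)) := by
    intro i h1 h2
    have huv : u ^ (k + 1 - i) * (star u) ^ (k - i) = u := by
      rw [show k + 1 - i = (k - i) + 1 by omega, pow_succ']
      rw [mul_assoc, can2, mul_one]
    calc e i * u = e i * (u ^ (k + 1 - i) * (star u) ^ (k - i)) := by rw [huv]
      _ = e i * u ^ (k + 1 - i) * (star u) ^ (k - i) := by rw [mul_assoc]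
      _ = u ^ (k + 1 - i) * e 1 * (star u) ^ (k - i) := by rw [he1X i h1 h2]
      _ = u ^ (k + 1 - i) * (e 1 * (star u) ^ (k - i)) := by rw [mul_assoc]
  have hdnorm : ∀ i, 1 ≤ i → i ≤ k → ‖t i - e i * u‖ ≤ m := by
    intro i h1 h2
    rcases Nat.lt_or_ge i k with h | h
    · have hd_eq : t i - e i * u = u ^ (k + 1 - i) * ((z i - e 1) * (star u) ^ (k - i)) := by
        rw [ht_eq i h1 h2, heiu i h1 h2, sub_mul, mul_sub]
      rw [hd_eq]
      have hzm : ‖z i - e 1‖ ≤ m :=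
        Finset.le_sup' (fun j => ‖z j - e 1‖) (Finset.mem_Icc.mpr ⟨h1, by omega⟩)
      calc ‖u ^ (k + 1 - i) * ((z i - e 1) * (star u) ^ (k - i))‖
          ≤ ‖u ^ (k + 1 - i)‖ * ‖(z i - e 1) * (star u) ^ (k - i)‖ := norm_mul_le _ _
        _ ≤ ‖u ^ (k + 1 - i)‖ * (‖z i - e 1‖ * ‖(star u) ^ (k - i)‖) :=
            mul_le_mul_of_nonneg_left (norm_mul_le _ _) (norm_nonneg _)
        _ ≤ 1 * (m * 1) :=
            mul_le_mul (hupow _) (mul_le_mul hzm (hvpow _) (norm_nonneg _) hm0)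
              (by positivity) zero_le_one
        _ = m := by ring
    · have hik : i = k := by omega
      have htk : t k = e k * u := by
        show e k * u ^ (k + 1 - k) * z k * (star u) ^ (k - k) = e k * u
        rw [show k + 1 - k = 1 by omega, Nat.sub_self, pow_zero, pow_one, mul_one, hzk]
        have h5 : u * e 1 = e k * u := by
          have h6 := heu1 k (by omega) le_rfl
          rw [hcyc] at h6
          exact h6.symm
        rw [mul_assoc, h5, ← mul_assoc, hee k (by omega) (by omega)]
      rw [hik, htk, sub_self, norm_zero]
      exact hm0
  have halg : ∀ r : ℝ, 0 ≤ r → (0 : A) ≤ algebraMap ℝ A r := by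
    intro r hr
    have h1 : algebraMap ℝ A r = star (Real.sqrt r • (1 : A)) * (Real.sqrt r • (1 : A)) := by
      rw [star_smul, star_one, star_trivial, smul_mul_smul_comm, Real.mul_self_sqrt hr,
        one_mul, Algebra.algebraMap_eq_smul_one]
    rw [h1]
    exact star_mul_self_nonneg _
  have hdd_sa : ∀ x : A, IsSelfAdjoint (star x * x) := fun x => by
    rw [IsSelfAdjoint, star_mul, star_star]
  have hb_le : ∀ i ∈ Finset.Icc 1 k,
      star (t i - e i * u) * (t i - e i * u) ≤ m ^ 2 • e (i + 1) := by
    intro i hi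
    obtain ⟨hi1, hi2⟩ := Finset.mem_Icc.mp hi
    have hnd : ‖star (t i - e i * u) * (t i - e i * u)‖ ≤ m ^ 2 := by
      rw [CStarRing.norm_star_mul_self]
      have := hdnorm i hi1 hi2
      nlinarith [norm_nonneg (t i - e i * u)]
    have h1 : star (t i - e i * u) * (t i - e i * u) ≤ algebraMap ℝ A (m ^ 2) := by
      calc star (t i - e i * u) * (t i - e i * u)
          ≤ algebraMap ℝ A ‖star (t i - e i * u) * (t i - e i * u)‖ :=
            (hdd_sa _).le_algebraMap_norm_self
        _ ≤ algebraMap ℝ A (m ^ 2) := by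
            rw [← sub_nonneg, ← map_sub]
            exact halg _ (by linarith)
    have h2 := star_left_conjugate_le_conjugate h1 (e (i + 1))
    have h3 : star (e (i + 1)) * (star (t i - e i * u) * (t i - e i * u)) * e (i + 1)
        = star (t i - e i * u) * (t i - e i * u) := by
      rw [hsa (i + 1) (by omega) (by omega)]
      calc e (i + 1) * (star (t i - e i * u) * (t i - e i * u)) * e (i + 1)
          = (e (i + 1) * star (t i - e i * u)) * ((t i - e i * u) * e (i + 1)) := by
            simp only [mul_assoc]
        _ = star (t i - e i * u) * (t i - e i * u) := by
            rw [hdsr i hi1 hi2, hdr i hi1 hi2]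
    have h4 : star (e (i + 1)) * algebraMap ℝ A (m ^ 2) * e (i + 1) = m ^ 2 • e (i + 1) := by
      rw [hsa (i + 1) (by omega) (by omega), Algebra.algebraMap_eq_smul_one, mul_smul_comm,
        mul_one, smul_mul_assoc, hee (i + 1) (by omega) (by omega)]
    rw [h3, h4] at h2
    exact h2
  have hSSin : ∀ i ∈ Finset.Icc 1 k,
      star (t i - e i * u) * (∑ j ∈ Finset.Icc 1 k, (t j - e j * u))
      = star (t i - e i * u) * (t i - e i * u) := by
    intro i hi
    obtain ⟨hi1, hi2⟩ := Finset.mem_Icc.mp hi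
    rw [Finset.mul_sum]
    exact Finset.sum_eq_single i (fun j hj hne => by
        obtain ⟨hj1, hj2⟩ := Finset.mem_Icc.mp hj
        calc star (t i - e i * u) * (t j - e j * u)
            = star (t i - e i * u) * e i * (e j * (t j - e j * u)) := by
              rw [hdsl i hi1 hi2, hdl j hj1 hj2]
          _ = star (t i - e i * u) * (e i * e j) * (t j - e j * u) := by
              simp only [mul_assoc]
          _ = 0 := by rw [horth i j hi1 hi2 hj1 hj2 (Ne.symm hne), mul_zero, zero_mul])
      (fun hx => absurd hi hx)
  have hSS : star (w - u) * (w - u)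
      = ∑ i ∈ Finset.Icc 1 k, star (t i - e i * u) * (t i - e i * u) := by
    rw [hwmu, star_sum, Finset.sum_mul]
    exact Finset.sum_congr rfl hSSin
  have hsum_le : (∑ i ∈ Finset.Icc 1 k, star (t i - e i * u) * (t i - e i * u))
      ≤ m ^ 2 • p := by
    calc (∑ i ∈ Finset.Icc 1 k, star (t i - e i * u) * (t i - e i * u))
        ≤ ∑ i ∈ Finset.Icc 1 k, m ^ 2 • e (i + 1) := Finset.sum_le_sum hb_le
      _ = m ^ 2 • ∑ i ∈ Finset.Icc 1 k, e (i + 1) := Finset.smul_sum.symm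
      _ = m ^ 2 • p := by rw [hshift]
  have hpn : ‖p‖ ≤ 1 := by
    have h := CStarRing.norm_star_mul_self (x := p)
    rw [hpsa, hpp] at h
    nlinarith [norm_nonneg p]
  have hnormwu : ‖w - u‖ ≤ m := by
    have h0 : (0 : A) ≤ star (w - u) * (w - u) := star_mul_self_nonneg _
    have h1 : ‖star (w - u) * (w - u)‖ ≤ ‖m ^ 2 • p‖ := by
      apply CStarAlgebra.norm_le_norm_of_nonneg_of_le h0
      rw [hSS]
      exact hsum_le
    have h2 : ‖(m ^ 2 : ℝ) • p‖ = m ^ 2 * ‖p‖ := by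
      rw [norm_smul, Real.norm_eq_abs, abs_of_nonneg (by positivity)]
    have h3 : ‖w - u‖ * ‖w - u‖ = ‖star (w - u) * (w - u)‖ :=
      (CStarRing.norm_star_mul_self).symm
    nlinarith [norm_nonneg (w - u), norm_nonneg p]
  -- Part 3 : powers of w implement the shift
  have hejw : ∀ j, 1 ≤ j → j ≤ k → e j * w = t j := by
    intro j h1 h2
    have h0 : e j * ((1 - p) * u) = 0 := by
      rw [← mul_assoc, he1p j h1 h2, zero_mul]
    rw [hw2, mul_add, Finset.mul_sum]
    rw [Finset.sum_eq_single j (fun i hi hne => by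
        obtain ⟨hi1, hi2⟩ := Finset.mem_Icc.mp hi
        exact htl0 i j hi1 hi2 h1 h2 (Ne.symm hne))
      (fun hx => absurd (Finset.mem_Icc.mpr ⟨h1, h2⟩) hx)]
    rw [htl j h1 h2, h0, add_zero]
  have hswt : ∀ j, 1 ≤ j → j ≤ k → star w * t j = e (j + 1) := by
    intro j h1 h2
    have h0 : star ((1 - p) * u) * t j = 0 := by
      rw [hsr]
      calc star u * (1 - p) * t j = star u * (1 - p) * (e j * t j) := by rw [htl j h1 h2]
        _ = star u * ((1 - p) * e j) * t j := by simp only [mul_assoc]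
        _ = 0 := by rw [h1pe j h1 h2, mul_zero, zero_mul]
    rw [hw2, star_add, add_mul, star_sum, Finset.sum_mul]
    rw [Finset.sum_eq_single j (fun i hi hne => by
        obtain ⟨hi1, hi2⟩ := Finset.mem_Icc.mp hi
        exact htot i j hi1 hi2 h1 h2 hne)
      (fun hx => absurd (Finset.mem_Icc.mpr ⟨h1, h2⟩) hx)]
    rw [htt j h1 h2, h0, add_zero]
  have h3main : ∀ i, i ≤ k → star (w ^ i) * e 1 * w ^ i = e (i + 1) := by
    intro i
    induction i with
    | zero => intro _; simp
    | succ n ih =>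
      intro hn1
      have hn := ih (by omega)
      have hcont : ∀ x : A, star (w ^ n) * (e 1 * (w ^ n * x)) = e (n + 1) * x := by
        intro x
        calc star (w ^ n) * (e 1 * (w ^ n * x)) = (star (w ^ n) * e 1 * w ^ n) * x := by
              simp only [mul_assoc]
          _ = e (n + 1) * x := by rw [hn]
      rw [pow_succ, star_mul]
      calc star w * star (w ^ n) * e 1 * (w ^ n * w)
          = star w * (star (w ^ n) * (e 1 * (w ^ n * w))) := by simp only [mul_assoc]
        _ = star w * (e (n + 1) * w) := by rw [hcont]
        _ = star w * t (n + 1) := by rw [hejw (n + 1) (by omega) (by omega)]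
        _ = e (n + 1 + 1) := hswt (n + 1) (by omega) (by omega)
  -- Part 4 : the k-th power of w fixes B
  have hprodsucc : ∀ n : ℕ, ((List.range (n + 1)).map (fun i => z (i + 1))).prod
      = ((List.range n).map (fun i => z (i + 1))).prod * z (n + 1) := by
    intro n
    rw [List.range_succ, List.map_append, List.prod_append]
    simp
  have hPe : ∀ n, n ≤ k →
      e 1 * ((List.range n).map (fun i => z (i + 1))).prod * e 1
      = e 1 * ((List.range n).map (fun i => z (i + 1))).prod := by
    intro n hn
    cases n with
    | zero => simp [he11]
    | succ d =>
      rw [hprodsucc d]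
      calc e 1 * (((List.range d).map (fun i => z (i + 1))).prod * z (d + 1)) * e 1
          = e 1 * (((List.range d).map (fun i => z (i + 1))).prod * (z (d + 1) * e 1)) := by
            simp only [mul_assoc]
        _ = e 1 * (((List.range d).map (fun i => z (i + 1))).prod * z (d + 1)) := by
            rw [(hzall (d + 1) (by omega) (by omega)).2.1]
  have hcl : ∀ j, j ≤ k → e 1 * w ^ j
      = u ^ k * (e 1 * ((List.range j).map (fun i => z (i + 1))).prod * (star u) ^ (k - j)) := by
    intro j
    induction j with
    | zero =>
      intro _
      simp only [pow_zero, mul_one, List.range_zero, List.map_nil, List.prod_nil, Nat.sub_zero]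
      have h1k : e 1 * u ^ k = u ^ k * e 1 := by
        have h := heum k 1 le_rfl (by omega)
        rwa [show 1 + k = k + 1 by omega, hcyc] at h
      calc e 1 = e 1 * (u ^ k * (star u) ^ k) := by rw [can2, mul_one]
        _ = e 1 * u ^ k * (star u) ^ k := by rw [mul_assoc]
        _ = u ^ k * e 1 * (star u) ^ k := by rw [h1k]
        _ = u ^ k * (e 1 * (star u) ^ k) := by rw [mul_assoc]
    | succ n ih =>
      intro hn1
      have hn := ih (by omega)
      have hnk : n ≤ k := by omega
      have ht1 : t (n + 1) = u ^ (k - n) * (z (n + 1) * (star u) ^ (k - (n + 1))) := by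
        have h := ht_eq (n + 1) (by omega) (by omega)
        rwa [show k + 1 - (n + 1) = k - n by omega] at h
      have s3 : e (n + 1) * w = u ^ (k - n) * (z (n + 1) * (star u) ^ (k - (n + 1))) := by
        rw [hejw (n + 1) (by omega) (by omega), ht1]
      have hc : e 1 * ((star u) ^ (k - n) * w) = (star u) ^ (k - n) * (e (n + 1) * w) := by
        rw [← mul_assoc, ← he2Xs n hnk, mul_assoc]
      have inner : e 1 * (((List.range n).map (fun i => z (i + 1))).prod *
            ((star u) ^ (k - n) * w))
          = e 1 * (((List.range (n + 1)).map (fun i => z (i + 1))).prod *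
            (star u) ^ (k - (n + 1))) := by
        calc e 1 * (((List.range n).map (fun i => z (i + 1))).prod * ((star u) ^ (k - n) * w))
            = (e 1 * ((List.range n).map (fun i => z (i + 1))).prod * e 1) *
                ((star u) ^ (k - n) * w) := by
              rw [hPe n hnk]; simp only [mul_assoc]
          _ = (e 1 * ((List.range n).map (fun i => z (i + 1))).prod) *
                (e 1 * ((star u) ^ (k - n) * w)) := by simp only [mul_assoc]
          _ = (e 1 * ((List.range n).map (fun i => z (i + 1))).prod) *
                ((star u) ^ (k - n) * (e (n + 1) * w)) := by rw [hc]
          _ = (e 1 * ((List.range n).map (fun i => z (i + 1))).prod) *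
                ((star u) ^ (k - n) * (u ^ (k - n) *
                  (z (n + 1) * (star u) ^ (k - (n + 1))))) := by rw [s3]
          _ = (e 1 * ((List.range n).map (fun i => z (i + 1))).prod) *
                (z (n + 1) * (star u) ^ (k - (n + 1))) := by rw [can1']
          _ = e 1 * (((List.range (n + 1)).map (fun i => z (i + 1))).prod *
                (star u) ^ (k - (n + 1))) := by
              rw [hprodsucc n]; simp only [mul_assoc]
      rw [pow_succ, ← mul_assoc, hn]
      calc u ^ k * (e 1 * ((List.range n).map (fun i => z (i + 1))).prod *
              (star u) ^ (k - n)) * w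
          = u ^ k * (e 1 * (((List.range n).map (fun i => z (i + 1))).prod *
              ((star u) ^ (k - n) * w))) := by simp only [mul_assoc]
        _ = u ^ k * (e 1 * (((List.range (n + 1)).map (fun i => z (i + 1))).prod *
              (star u) ^ (k - (n + 1)))) := by rw [inner]
        _ = u ^ k * (e 1 * ((List.range (n + 1)).map (fun i => z (i + 1))).prod *
              (star u) ^ (k - (n + 1))) := by simp only [mul_assoc]
  have hPkeq : ((List.range k).map (fun i => z (i + 1))).prod = zz * e 1 := by
    have h2 : ((List.range k).map (fun i => z (i + 1))).prod
        = ((List.range (k - 1)).map (fun i => z (i + 1))).prod * z k := by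
      conv_lhs => rw [show k = (k - 1) + 1 by omega]
      rw [hprodsucc (k - 1), show k - 1 + 1 = k by omega]
    rw [h2, ← hzzprod, hzk]
  have hzz1 : e 1 * (zz * e 1) = zz := by
    conv_rhs => rw [hzzcorner.1]
    simp only [mul_assoc]
  have hE : e 1 * w ^ k = u ^ k * zz := by
    have h := hcl k le_rfl
    rw [hPkeq, Nat.sub_self, pow_zero, mul_one, hzz1] at h
    exact h
  have hpart4 : ∀ b ∈ B, star (w ^ k) * b * w ^ k = b := by
    intro b hb
    have hbc := hBcorner b hb
    have hzzBb := hzzB b hb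
    calc star (w ^ k) * b * w ^ k
        = star (w ^ k) * (e 1 * b * e 1) * w ^ k := by rw [← hbc]
      _ = star (e 1 * w ^ k) * b * (e 1 * w ^ k) := by
          rw [star_mul, hsa1]; simp only [mul_assoc]
      _ = star (u ^ k * zz) * b * (u ^ k * zz) := by rw [hE]
      _ = star zz * star (u ^ k) * b * (u ^ k) * zz := by
          rw [star_mul]; simp only [mul_assoc]
      _ = b := hzzBb
  exact ⟨hwu, hnormwu, fun i hi1 hi2 => h3main i (by omega), hpart4⟩
end

section
/- Let A be a unital C*-algebra, let n ≥ 1, let e₁, …, e_n be mutually orthogonal projections in A, and let u be a unitary in A such that u* e_i u = e_{i+1} for i = 1, …, n, where e_{n+1} = e₁. Set p = e₁ + e₂ + ⋯ + e_n. Then the (not necessarily unital) star-subalgebra of A generated by {e_i : 1 ≤ i ≤ n} ∪ {e_i u e_{i+1} : 1 ≤ i ≤ n−1} ∪ {p u p} is equal to the star-subalgebra of A generated by {e_i : 1 ≤ i ≤ n} ∪ {e_i u e_{i+1} : 1 ≤ i ≤ n−1} ∪ {e₁ u^n e₁}. -/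
/-- With `e 1, …, e n` mutually orthogonal projections cyclically
permuted by a unitary `u`, and `p = e 1 + ⋯ + e n`, the star-subalgebra generated by
the `e i`, the `e i * u * e (i+1)` and `p * u * p` coincides with the star-subalgebra
generated by the `e i`, the `e i * u * e (i+1)` and `e 1 * u ^ n * e 1`. -/
theorem stmt_2 {A : Type*} [NormedRing A] [StarRing A] [CStarRing A]
    [NormedAlgebra ℂ A] [StarModule ℂ A] [CompleteSpace A]
    (n : ℕ) (hn : 1 ≤ n) (e : ℕ → A)
    (heproj : ∀ i, 1 ≤ i → i ≤ n → IsSelfAdjoint (e i) ∧ e i * e i = e i)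
    (horth : ∀ i j, 1 ≤ i → i ≤ n → 1 ≤ j → j ≤ n → i ≠ j → e i * e j = 0)
    (u : A) (hu : u ∈ unitary A)
    (hcyc : e (n + 1) = e 1)
    (hueu : ∀ i, 1 ≤ i → i ≤ n → star u * e i * u = e (i + 1))
    (p : A) (hp : p = ∑ i ∈ Finset.Icc 1 n, e i) :
    NonUnitalStarAlgebra.adjoin ℂ
        ({x | ∃ i, 1 ≤ i ∧ i ≤ n ∧ x = e i} ∪
         {x | ∃ i, 1 ≤ i ∧ i ≤ n - 1 ∧ x = e i * u * e (i + 1)} ∪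
         {p * u * p} : Set A) =
      NonUnitalStarAlgebra.adjoin ℂ
        ({x | ∃ i, 1 ≤ i ∧ i ≤ n ∧ x = e i} ∪
         {x | ∃ i, 1 ≤ i ∧ i ≤ n - 1 ∧ x = e i * u * e (i + 1)} ∪
         {e 1 * u ^ n * e 1} : Set A) := by
  obtain ⟨m, rfl⟩ : ∃ m, n = m + 1 := ⟨n - 1, by omega⟩
  have huu : u * star u = 1 := (Unitary.mem_iff.mp hu).2
  -- commutation
  have hcomm : ∀ i, 1 ≤ i → i ≤ m + 1 → e i * u = u * e (i + 1) := by
    intro i h1 h2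
    have h := hueu i h1 h2
    rw [mul_assoc] at h
    rw [← h, ← mul_assoc, ← mul_assoc, huu, one_mul]
  -- idempotence (extended to n+1)
  have hidem : ∀ i, 1 ≤ i → i ≤ m + 2 → e i * e i = e i := by
    intro i h1 h2
    rcases Nat.lt_or_ge i (m + 2) with h | h
    · exact (heproj i h1 (by omega)).2
    · have : i = m + 1 + 1 := by omega
      subst this
      rw [hcyc]
      exact (heproj 1 le_rfl (by omega)).2
  -- e i * p = e i
  have hep : ∀ i, 1 ≤ i → i ≤ m + 1 → e i * p = e i := by
    intro i h1 h2
    rw [hp, Finset.mul_sum, Finset.sum_eq_single i]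
    · exact hidem i h1 (by omega)
    · intro j hj hne
      simp only [Finset.mem_Icc] at hj
      exact horth i j h1 h2 hj.1 hj.2 (fun h => hne h.symm)
    · intro hi
      simp only [Finset.mem_Icc] at hi
      omega
  -- p * e i = e i
  have hpe : ∀ i, 1 ≤ i → i ≤ m + 1 → p * e i = e i := by
    intro i h1 h2
    rw [hp, Finset.sum_mul, Finset.sum_eq_single i]
    · exact hidem i h1 (by omega)
    · intro j hj hne
      simp only [Finset.mem_Icc] at hj
      exact horth j i hj.1 hj.2 h1 h2 hne
    · intro hi
      simp only [Finset.mem_Icc] at hi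
      omega
  -- powers
  have hpow : ∀ k i, 1 ≤ i → i + k ≤ m + 2 → e i * u ^ k = u ^ k * e (i + k) := by
    intro k
    induction k with
    | zero => intro i h1 h2; simp
    | succ k ih =>
      intro i h1 h2
      rw [pow_succ', ← mul_assoc, hcomm i h1 (by omega), mul_assoc,
        ih (i + 1) (by omega) (by omega), ← mul_assoc, ← pow_succ',
        show i + 1 + k = i + (k + 1) from by omega]
  -- absorption: e 1 * u ^ k * e (k+1) = u ^ k * e (k+1)
  have habs : ∀ k, k ≤ m + 1 → e 1 * u ^ k * e (k + 1) = u ^ k * e (k + 1) := by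
    intro k hk
    rw [hpow k 1 le_rfl (by omega)]
    rw [show 1 + k = k + 1 from by omega, mul_assoc, hidem (k + 1) (by omega) (by omega)]
  -- chain products lie in any subalgebra containing the common generators
  have hchain : ∀ (T : NonUnitalStarSubalgebra ℂ A),
      (∀ i, 1 ≤ i → i ≤ m → e i * u * e (i + 1) ∈ T) →
      ∀ k, 1 ≤ k → k ≤ m → e 1 * u ^ k * e (k + 1) ∈ T := by
    intro T hT k
    induction k with
    | zero => omega
    | succ k ih =>
      intro _ hk
      rcases Nat.eq_zero_or_pos k with rfl | hk1
      · rw [pow_one]; exact hT 1 le_rfl (by omega)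
      · have hc : e (k + 1) * u = u * e (k + 2) := by
          rw [hcomm (k + 1) (by omega) (by omega), show k + 1 + 1 = k + 2 from by omega]
        have hi1 : e (k + 1) * e (k + 1) = e (k + 1) := hidem (k + 1) (by omega) (by omega)
        have hi2 : e (k + 2) * e (k + 2) = e (k + 2) := hidem (k + 2) (by omega) (by omega)
        have hc' : ∀ x : A, e (k+1) * (u * x) = u * (e (k+2) * x) := fun x => by
          rw [← mul_assoc, hc, mul_assoc]
        have hi1' : ∀ x : A, e (k+1) * (e (k+1) * x) = e (k+1) * x := fun x => by
          rw [← mul_assoc, hi1]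
        have key : e 1 * u ^ (k + 1) * e (k + 2) =
            (e 1 * u ^ k * e (k + 1)) * (e (k + 1) * u * e (k + 2)) := by
          rw [show (k:ℕ) + 2 = k + 1 + 1 from by omega, habs (k+1) (by omega),
            show (k:ℕ) + 1 + 1 = k + 2 from by omega, habs k (by omega), pow_succ]
          simp only [mul_assoc]
          rw [hi1', hc', hi2]
        rw [key]
        exact mul_mem (ih hk1 (by omega)) (hT (k + 1) (by omega) hk)
  have hs1 : star (e 1) = e 1 := (heproj 1 le_rfl (by omega)).1
  have hsm : star (e (m + 1)) = e (m + 1) := (heproj (m + 1) (by omega) le_rfl).1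
  have husm : star (u ^ m) * u ^ m = 1 := (Unitary.mem_iff.mp (pow_mem hu m)).1
  have he1' : ∀ x : A, e 1 * (e 1 * x) = e 1 * x := fun x => by
    rw [← mul_assoc, hidem 1 le_rfl (by omega)]
  have heM' : ∀ x : A, e (m + 1) * (e (m + 1) * x) = e (m + 1) * x := fun x => by
    rw [← mul_assoc, hidem (m + 1) (by omega) (by omega)]
  have hcM : ∀ x : A, e (m + 1) * (u * x) = u * (e 1 * x) := fun x => by
    rw [← mul_assoc, hcomm (m + 1) (by omega) le_rfl, hcyc, mul_assoc]
  have husm' : ∀ x : A, star (u ^ m) * (u ^ m * x) = x := fun x => by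
    rw [← mul_assoc, husm, one_mul]
  -- p * u * p as a sum of generators
  have hterm : ∀ i ∈ Finset.Icc 1 (m + 1), e i * u * p = e i * u * e (i + 1) := by
    intro i hi
    simp only [Finset.mem_Icc] at hi
    have h1 : e (i + 1) * p = e (i + 1) := by
      rcases Nat.lt_or_ge i (m + 1) with h | h
      · exact hep (i + 1) (by omega) (by omega)
      · have : i = m + 1 := by omega
        subst this
        rw [hcyc]; exact hep 1 le_rfl (by omega)
    rw [hcomm i hi.1 hi.2]
    simp only [mul_assoc]
    rw [h1, hidem (i + 1) (by omega) (by omega)]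
  have hpup : p * u * p = ∑ i ∈ Finset.Icc 1 (m + 1), e i * u * e (i + 1) := by
    nth_rewrite 1 [hp]
    rw [Finset.sum_mul, Finset.sum_mul]
    exact Finset.sum_congr rfl hterm
  -- the key cross identities
  have hfin : e 1 * u ^ (m + 1) * e 1 = (e 1 * u ^ m * e (m + 1)) * (e (m + 1) * u * e 1) := by
    conv_lhs => rw [hpow (m + 1) 1 le_rfl (by omega),
      show 1 + (m + 1) = m + 1 + 1 from by omega, hcyc, mul_assoc,
      hidem 1 le_rfl (by omega)]
    conv_rhs => rw [habs m (by omega)]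
    simp only [mul_assoc]
    rw [heM', hcM, hidem 1 le_rfl (by omega), ← mul_assoc, ← pow_succ]
  have hmid : e (m + 1) * (p * u * p) * e 1 = e (m + 1) * u * e 1 := by
    rw [show e (m + 1) * (p * u * p) * e 1 = e (m + 1) * p * u * (p * e 1) from by
        simp only [mul_assoc],
      hep (m + 1) (by omega) le_rfl, hpe 1 le_rfl (by omega), mul_assoc]
  have hstar : e (m + 1) * u * e 1 =
      star (e 1 * u ^ m * e (m + 1)) * (e 1 * u ^ (m + 1) * e 1) := by
    have hkey : e 1 * (u ^ (m + 1) * e 1) = u ^ m * (e (m + 1) * (u * e 1)) := by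
      conv_lhs => rw [← mul_assoc, pow_succ, ← mul_assoc, hpow m 1 le_rfl (by omega),
        show 1 + m = m + 1 from by omega]
      simp only [mul_assoc]
    simp only [star_mul, hs1, hsm, mul_assoc]
    rw [he1', hkey, husm', heM', ← mul_assoc]
  -- now the main goal
  apply le_antisymm <;> apply NonUnitalStarAlgebra.adjoin_le <;>
    rintro x ((⟨i, h1, h2, rfl⟩ | ⟨i, h1, h2, rfl⟩) | rfl)
  · exact NonUnitalStarAlgebra.subset_adjoin ℂ _ (Or.inl (Or.inl ⟨i, h1, h2, rfl⟩))
  · exact NonUnitalStarAlgebra.subset_adjoin ℂ _ (Or.inl (Or.inr ⟨i, h1, h2, rfl⟩))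
  · -- p * u * p lies in the algebra generated with e 1 * u ^ (m+1) * e 1
    rw [hpup, Finset.sum_Icc_succ_top (show 1 ≤ m + 1 by omega), hcyc]
    apply add_mem
    · apply sum_mem
      intro i hi
      simp only [Finset.mem_Icc] at hi
      exact NonUnitalStarAlgebra.subset_adjoin ℂ _
        (Or.inl (Or.inr ⟨i, hi.1, by omega, rfl⟩))
    · rcases Nat.eq_zero_or_pos m with rfl | hm
      · exact NonUnitalStarAlgebra.subset_adjoin ℂ _ (Or.inr (by norm_num))
      · rw [hstar]
        exact mul_mem
          (star_mem (hchain _ (fun i hi1 hi2 => NonUnitalStarAlgebra.subset_adjoin ℂ _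
            (Or.inl (Or.inr ⟨i, hi1, by omega, rfl⟩))) m hm le_rfl))
          (NonUnitalStarAlgebra.subset_adjoin ℂ _ (Or.inr rfl))
  · exact NonUnitalStarAlgebra.subset_adjoin ℂ _ (Or.inl (Or.inl ⟨i, h1, h2, rfl⟩))
  · exact NonUnitalStarAlgebra.subset_adjoin ℂ _ (Or.inl (Or.inr ⟨i, h1, h2, rfl⟩))
  · -- e 1 * u ^ (m+1) * e 1 lies in the algebra generated with p * u * p
    rcases Nat.eq_zero_or_pos m with rfl | hm
    · have hpe1 : p = e 1 := by rw [hp]; simp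
      exact NonUnitalStarAlgebra.subset_adjoin ℂ _ (Or.inr (by rw [hpe1]; norm_num))
    · rw [hfin, ← hmid]
      refine mul_mem (hchain _ (fun i hi1 hi2 => NonUnitalStarAlgebra.subset_adjoin ℂ _
        (Or.inl (Or.inr ⟨i, hi1, by omega, rfl⟩))) m hm le_rfl) ?_
      exact mul_mem (mul_mem
        (NonUnitalStarAlgebra.subset_adjoin ℂ _ (Or.inl (Or.inl ⟨m + 1, by omega, le_rfl, rfl⟩)))
        (NonUnitalStarAlgebra.subset_adjoin ℂ _ (Or.inr rfl)))
        (NonUnitalStarAlgebra.subset_adjoin ℂ _ (Or.inl (Or.inl ⟨1, le_rfl, by omega, rfl⟩)))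
end

section
/- Let A be a unital simple C*-algebra and let e ∈ A be a nonzero projection. Then there exist finitely many elements v₁, …, v_m ∈ A with ‖v_k‖ ≤ 1 for each k such that Σ_{k=1}^{m} v_k* e v_k = 1. -/
/-!
Simplicity makes `e` generate the unit ideal: `1 = ∑ aᵢ e bᵢ`. With `wᵢ = aᵢ* + bᵢ`, the positive
element `s = ∑ wᵢ* e wᵢ` equals `∑ aᵢ e aᵢ* + ∑ bᵢ* e bᵢ + 2`, so `s ≥ 1` is invertible and
`vᵢ = wᵢ s^(-1/2)` satisfy `∑ vᵢ* e vᵢ = 1`. Replacing `vᵢ` by `e vᵢ` leaves the sum unchanged, and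
then `(e vᵢ)* (e vᵢ) = vᵢ* e vᵢ ≤ 1` gives `‖e vᵢ‖ ≤ 1`.
-/

open Finset

theorem TwoSidedIdeal.exists_sum_mul_mul_eq_of_mem_span_singleton {R : Type*} [Ring R] {e x : R}
    (hx : x ∈ span {e}) : ∃ (n : ℕ) (a b : Fin n → R), ∑ i, a i * e * b i = x := by
  rw [mem_span_iff_mem_addSubgroup_closure] at hx
  induction hx using AddSubgroup.closure_induction with
  | mem x hx =>
    obtain ⟨-, ⟨a, -, _, rfl, rfl⟩, b, -, rfl⟩ := hx
    exact ⟨1, ![a], ![b], by simp⟩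
  | zero => exact ⟨0, ![], ![], by simp⟩
  | add x y _ _ hx hy =>
    obtain ⟨n, a, b, rfl⟩ := hx
    obtain ⟨m, a', b', rfl⟩ := hy
    exact ⟨n + m, Fin.append a a', Fin.append b b', by simp [Fin.sum_univ_add]⟩
  | neg x _ hx =>
    obtain ⟨n, a, b, rfl⟩ := hx
    exact ⟨n, -a, b, by simp [sum_neg_distrib]⟩

theorem IsSimpleRing.exists_sum_mul_mul_eq_one {R : Type*} [Ring R] [IsSimpleRing R] {e : R}
    (he : e ≠ 0) : ∃ (n : ℕ) (a b : Fin n → R), ∑ i, a i * e * b i = 1 :=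
  TwoSidedIdeal.exists_sum_mul_mul_eq_of_mem_span_singleton <|
    one_mem_of_ne_zero_mem _ he (TwoSidedIdeal.subset_span rfl)

theorem IsSelfAdjoint.star_add_conjugate_eq {R : Type*} [Ring R] [StarRing R] {e : R}
    (he : IsSelfAdjoint e) (x y : R) :
    star (star x + y) * e * (star x + y) =
      x * e * star x + star y * e * y + (x * e * y + star (x * e * y)) := by
  simp only [star_add, star_star, star_mul, he.star_eq]
  noncomm_ring

theorem one_le_sum_star_add_conjugate {R : Type*} [Ring R] [StarRing R] [PartialOrder R]
    [StarOrderedRing R] {ι : Type*} [Fintype ι] {e : R} (he : 0 ≤ e) {a b : ι → R}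
    (h : ∑ i, a i * e * b i = 1) :
    1 ≤ ∑ i, star (star (a i) + b i) * e * (star (a i) + b i) := by
  simp only [(IsSelfAdjoint.of_nonneg he).star_add_conjugate_eq, sum_add_distrib, ← star_sum, h,
    star_one]
  have hP : 0 ≤ ∑ i, a i * e * star (a i) :=
    sum_nonneg fun i _ => star_right_conjugate_nonneg he _
  have hQ : 0 ≤ ∑ i, star (b i) * e * b i :=
    sum_nonneg fun i _ => star_left_conjugate_nonneg he _
  calc (1 : R) = 0 + 0 + (1 + 0) := by simp
    _ ≤ _ := by gcongr; exact zero_le_one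

theorem IsStarProjection.star_mul_mul_self {R : Type*} [Semigroup R] [StarMul R] {e : R}
    (he : IsStarProjection e) (x : R) :
    star (e * x) * (e * x) = star x * e * x := by
  rw [star_mul, he.isSelfAdjoint.star_eq, mul_assoc, ← mul_assoc e, he.isIdempotentElem.eq,
    mul_assoc]

theorem IsStarProjection.star_mul_mul_mul_self {R : Type*} [Semigroup R] [StarMul R] {e : R}
    (he : IsStarProjection e) (x : R) :
    star (e * x) * e * (e * x) = star x * e * x := by
  rw [mul_assoc _ e, ← mul_assoc e, he.isIdempotentElem.eq, he.star_mul_mul_self]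

section CStarAlgebra

variable {A : Type*} [CStarAlgebra A] [PartialOrder A] [StarOrderedRing A] {ι : Type*} [Fintype ι]

theorem exists_sum_star_mul_mul_eq_one {e : A} (he : 0 ≤ e) {a b : ι → A}
    (h : ∑ i, a i * e * b i = 1) : ∃ v : ι → A, ∑ i, star (v i) * e * v i = 1 := by
  set w : ι → A := fun i => star (a i) + b i
  set s : A := ∑ i, star (w i) * e * w i
  have hs : IsStrictlyPositive s :=
    isStrictlyPositive_one.of_le (one_le_sum_star_add_conjugate he h)
  set c : A := s ^ (-(1 / 2) : ℝ)
  refine ⟨fun i => w i * c, ?_⟩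
  have hc : star c = c := (IsSelfAdjoint.of_nonneg CFC.rpow_nonneg).star_eq
  calc ∑ i, star (w i * c) * e * (w i * c) = star c * s * c := by
        simp only [s, mul_sum, sum_mul, star_mul, mul_assoc]
    _ = 1 := by rw [hc, CFC.conjugate_rpow_neg_one_half s]

theorem CStarAlgebra.norm_le_one_of_star_mul_self_le_one {x : A} (hx : star x * x ≤ 1) :
    ‖x‖ ≤ 1 := by
  have h : ‖x‖ * ‖x‖ ≤ 1 := by
    rw [← CStarRing.norm_star_mul_self]
    exact (norm_le_one_iff_of_nonneg _ (star_mul_self_nonneg x)).mpr hx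
  nlinarith [norm_nonneg x]

theorem IsStarProjection.norm_mul_le_one_and_sum_eq_one {e : A} (he : IsStarProjection e)
    {v : ι → A} (h : ∑ i, star (v i) * e * v i = 1) :
    (∀ i, ‖e * v i‖ ≤ 1) ∧ ∑ i, star (e * v i) * e * (e * v i) = 1 := by
  refine ⟨fun i => CStarAlgebra.norm_le_one_of_star_mul_self_le_one ?_, ?_⟩
  · rw [he.star_mul_mul_self, ← h]
    exact single_le_sum (f := fun i => star (v i) * e * v i)
      (fun i _ => star_left_conjugate_nonneg he.nonneg _) (mem_univ i)
  · simpa only [he.star_mul_mul_mul_self] using h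

end CStarAlgebra

/-- In a unital simple C*-algebra, for every nonzero projection `e`
there are finitely many elements `v 1, …, v m` of norm at most one with
`∑ k, (v k)* * e * v k = 1`. -/
theorem stmt_10 {A : Type*} [NormedRing A] [StarRing A] [CStarRing A]
    [NormedAlgebra ℂ A] [StarModule ℂ A] [CompleteSpace A] [IsSimpleRing A]
    (e : A) (he : IsSelfAdjoint e) (he2 : e * e = e) (hene : e ≠ 0) :
    ∃ (m : ℕ) (v : Fin m → A), (∀ k, ‖v k‖ ≤ 1) ∧
      ∑ k, star (v k) * e * v k = 1 := by
  let _ : CStarAlgebra A := ⟨⟩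
  let _ : PartialOrder A := CStarAlgebra.spectralOrder A
  let _ : StarOrderedRing A := CStarAlgebra.spectralOrderedRing A
  have hproj : IsStarProjection e := ⟨he2, he⟩
  obtain ⟨n, a, b, hab⟩ := IsSimpleRing.exists_sum_mul_mul_eq_one hene
  obtain ⟨v, hv⟩ := exists_sum_star_mul_mul_eq_one hproj.nonneg hab
  exact ⟨n, fun i => e * v i, hproj.norm_mul_le_one_and_sum_eq_one hv⟩
end
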